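/- arXiv:1603.00329 — 2 statements merged into one kernel-verified Lean document; each statement's English description precedes it below -/
import Mathlib

section
/- For a complete simple game with two types of voters, any failure of 2-trade robustness can be converted to a failure of 2-invariant trade robustness: if there exist two minimal winning coalition types (a_1,b_1), (a_2,b_2) and two losing types (u_1,v_1), (u_2,v_2) with a_1 + a_2 = u_1 + u_2 and b_1 + b_2 = v_1 + v_2, then there exist two shift-minimal winning types and two losing types with the same equal-sum property. -/
/-!
Order the types by `(x', y') ⪯ (x, y) ↔ x' ≤ x ∧ x' + y' ≤ x + y`. Every winning type dominates a
shift-minimal winning type (descend along `2x + y`), so replacing both winning types by such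
types lowers their sums `(S, T)` in `⪯`. The sums of pairs of losing types form a down-set for `⪯`
as long as `T ≤ 2 n₂`: one can lower `S`, lower `T`, or move a unit from `S` to `T`. The last
move may need both types: if every losing type with `x ≥ 1` already has `y = n₂`, the unit goes
to the other type `(0, t)`, and `(0, t + 1)` is still dominated by the losing type `(x, n₂)`.
-/

namespace TwoTypeGame

def IsUpset (n1 n2 : ℕ) (Win : ℕ → ℕ → Prop) : Prop :=
  ∀ x y x' y' : ℕ, x ≤ n1 → y ≤ n2 → x' ≤ x → x' + y' ≤ x + y → Win x' y' → Win x y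

def IsShiftMinimal (n2 : ℕ) (Win : ℕ → ℕ → Prop) (x y : ℕ) : Prop :=
  Win x y ∧ ∀ x' y' : ℕ, y' ≤ n2 → x' ≤ x → x' + y' ≤ x + y →
    (x' < x ∨ x' + y' < x + y) → ¬ Win x' y'

def IsLosingSum (n1 n2 : ℕ) (Win : ℕ → ℕ → Prop) (S T : ℕ) : Prop :=
  ∃ s1 t1 s2 t2 : ℕ, s1 ≤ n1 ∧ t1 ≤ n2 ∧ s2 ≤ n1 ∧ t2 ≤ n2 ∧
    ¬ Win s1 t1 ∧ ¬ Win s2 t2 ∧ s1 + s2 = S ∧ t1 + t2 = T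

theorem exists_isShiftMinimal_le {n2 : ℕ} {Win : ℕ → ℕ → Prop} {x y : ℕ} (hy : y ≤ n2)
    (hw : Win x y) :
    ∃ x' y', y' ≤ n2 ∧ x' ≤ x ∧ x' + y' ≤ x + y ∧ IsShiftMinimal n2 Win x' y' := by
  induction h : 2 * x + y using Nat.strong_induction_on generalizing x y with
  | _ m ih =>
  by_cases hmin : IsShiftMinimal n2 Win x y
  · exact ⟨x, y, hy, le_rfl, le_rfl, hmin⟩
  obtain ⟨x', y', hy', hx', hxy', hlt, hw'⟩ : ∃ x' y', y' ≤ n2 ∧ x' ≤ x ∧ x' + y' ≤ x + y ∧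
      (x' < x ∨ x' + y' < x + y) ∧ Win x' y' := by
    simpa [IsShiftMinimal, hw] using hmin
  obtain ⟨x'', y'', hy'', hx'', hxy'', hmin''⟩ := ih (2 * x' + y') (by omega) hy' hw' rfl
  exact ⟨x'', y'', hy'', by omega, by omega, hmin''⟩

variable {n1 n2 : ℕ} {Win : ℕ → ℕ → Prop}

theorem IsUpset.not_win_of_le (hW : IsUpset n1 n2 Win) {x y x' y' : ℕ} (hx : x ≤ n1)
    (hy : y ≤ n2) (hx' : x' ≤ x) (hxy' : x' + y' ≤ x + y) (hl : ¬ Win x y) : ¬ Win x' y' :=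
  fun hw => hl (hW x y x' y' hx hy hx' hxy' hw)

namespace IsLosingSum

variable {S T : ℕ}

theorem of_succ_fst (hW : IsUpset n1 n2 Win) (h : IsLosingSum n1 n2 Win (S + 1) T) :
    IsLosingSum n1 n2 Win S T := by
  obtain ⟨s1, t1, s2, t2, hs1, ht1, hs2, ht2, hl1, hl2, hS, hT⟩ := h
  rcases Nat.eq_zero_or_pos s1 with hs1_zero | hs1_pos
  · exact ⟨s1, t1, s2 - 1, t2, hs1, ht1, by omega, ht2, hl1,
      hW.not_win_of_le hs2 ht2 (by omega) (by omega) hl2, by omega, hT⟩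
  · exact ⟨s1 - 1, t1, s2, t2, by omega, ht1, hs2, ht2,
      hW.not_win_of_le hs1 ht1 (by omega) (by omega) hl1, hl2, by omega, hT⟩

theorem of_succ_snd (hW : IsUpset n1 n2 Win) (h : IsLosingSum n1 n2 Win S (T + 1)) :
    IsLosingSum n1 n2 Win S T := by
  obtain ⟨s1, t1, s2, t2, hs1, ht1, hs2, ht2, hl1, hl2, hS, hT⟩ := h
  rcases Nat.eq_zero_or_pos t1 with ht1_zero | ht1_pos
  · exact ⟨s1, t1, s2, t2 - 1, hs1, ht1, hs2, by omega, hl1,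
      hW.not_win_of_le hs2 ht2 le_rfl (by omega) hl2, hS, by omega⟩
  · exact ⟨s1, t1 - 1, s2, t2, hs1, by omega, hs2, ht2,
      hW.not_win_of_le hs1 ht1 le_rfl (by omega) hl1, hl2, hS, by omega⟩

theorem shift (hW : IsUpset n1 n2 Win) (h : IsLosingSum n1 n2 Win (S + 1) T)
    (hT : T < 2 * n2) : IsLosingSum n1 n2 Win S (T + 1) := by
  obtain ⟨s1, t1, s2, t2, hs1, ht1, hs2, ht2, hl1, hl2, hS, rfl⟩ := h
  by_cases h1 : 1 ≤ s1 ∧ t1 < n2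
  · exact ⟨s1 - 1, t1 + 1, s2, t2, by omega, by omega, hs2, ht2,
      hW.not_win_of_le hs1 ht1 (by omega) (by omega) hl1, hl2, by omega, by omega⟩
  by_cases h2 : 1 ≤ s2 ∧ t2 < n2
  · exact ⟨s1, t1, s2 - 1, t2 + 1, hs1, ht1, by omega, by omega, hl1,
      hW.not_win_of_le hs2 ht2 (by omega) (by omega) hl2, by omega, by omega⟩
  rcases Nat.eq_zero_or_pos s1 with hs1_zero | hs1_pos
  · exact ⟨s1, t1 + 1, s2 - 1, t2, hs1, by omega, by omega, ht2,
      hW.not_win_of_le hs2 ht2 (by omega) (by omega) hl2,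
      hW.not_win_of_le hs2 ht2 (by omega) (by omega) hl2, by omega, by omega⟩
  · exact ⟨s1 - 1, t1, s2, t2 + 1, by omega, ht1, hs2, by omega,
      hW.not_win_of_le hs1 ht1 (by omega) (by omega) hl1,
      hW.not_win_of_le hs1 ht1 (by omega) (by omega) hl1, by omega, by omega⟩

theorem mono_snd (hW : IsUpset n1 n2 Win) (h : IsLosingSum n1 n2 Win S T) {T' : ℕ}
    (hT' : T' ≤ T) : IsLosingSum n1 n2 Win S T' := by
  induction T, hT' using Nat.le_induction with
  | base => exact h
  | succ T _ ih => exact ih (h.of_succ_snd hW)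

theorem mono (hW : IsUpset n1 n2 Win) (h : IsLosingSum n1 n2 Win S T) {S' T' : ℕ}
    (hS' : S' ≤ S) (hST' : S' + T' ≤ S + T) (hT' : T' ≤ 2 * n2) :
    IsLosingSum n1 n2 Win S' T' := by
  induction S generalizing T with
  | zero =>
    obtain rfl : S' = 0 := by omega
    exact h.mono_snd hW (by omega)
  | succ S ih =>
    rcases Nat.lt_or_ge S S' with hSS' | hSS'
    · obtain rfl : S' = S + 1 := by omega
      exact h.mono_snd hW (by omega)
    rcases Nat.lt_or_ge T T' with hTT' | hTT'
    · exact ih (h.shift hW (by omega)) hSS' (by omega)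
    · exact ih (h.of_succ_fst hW) hSS' (by omega)

end IsLosingSum

end TwoTypeGame

/-- For a complete simple game with two types of voters, a failure of `2`-trade
robustness with minimal winning coalition types can be converted into one with
shift-minimal winning coalition types. -/
theorem stmt10 (n1 n2 : ℕ) (Win : ℕ → ℕ → Prop)
    (hupset : ∀ x y x' y' : ℕ, x ≤ n1 → y ≤ n2 → x' ≤ x → x' + y' ≤ x + y →
      Win x' y' → Win x y)
    (MinWin : ℕ → ℕ → Prop)
    (hMinWin : ∀ x y : ℕ, MinWin x y ↔ Win x y ∧
      (1 ≤ x → ¬ Win (x - 1) y) ∧ (1 ≤ y → ¬ Win x (y - 1)))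
    (ShiftMinWin : ℕ → ℕ → Prop)
    (hShiftMinWin : ∀ x y : ℕ, ShiftMinWin x y ↔ Win x y ∧
      ∀ x' y' : ℕ, y' ≤ n2 → x' ≤ x → x' + y' ≤ x + y →
        (x' < x ∨ x' + y' < x + y) → ¬ Win x' y')
    (a1 b1 a2 b2 u1 v1 u2 v2 : ℕ)
    (hb : a1 ≤ n1 ∧ b1 ≤ n2 ∧ a2 ≤ n1 ∧ b2 ≤ n2 ∧
      u1 ≤ n1 ∧ v1 ≤ n2 ∧ u2 ≤ n1 ∧ v2 ≤ n2)
    (hw1 : MinWin a1 b1) (hw2 : MinWin a2 b2)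
    (hl1 : ¬ Win u1 v1) (hl2 : ¬ Win u2 v2)
    (hsum1 : a1 + a2 = u1 + u2) (hsum2 : b1 + b2 = v1 + v2) :
    ∃ p1 q1 p2 q2 s1 t1 s2 t2 : ℕ,
      p1 ≤ n1 ∧ q1 ≤ n2 ∧ p2 ≤ n1 ∧ q2 ≤ n2 ∧
      s1 ≤ n1 ∧ t1 ≤ n2 ∧ s2 ≤ n1 ∧ t2 ≤ n2 ∧
      ShiftMinWin p1 q1 ∧ ShiftMinWin p2 q2 ∧
      ¬ Win s1 t1 ∧ ¬ Win s2 t2 ∧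
      p1 + p2 = s1 + s2 ∧ q1 + q2 = t1 + t2 := by
  obtain ⟨ha1, hb1, ha2, hb2, hu1, hv1, hu2, hv2⟩ := hb
  obtain ⟨p1, q1, hq1, hp1, hpq1, hmin1⟩ :=
    TwoTypeGame.exists_isShiftMinimal_le hb1 ((hMinWin a1 b1).1 hw1).1
  obtain ⟨p2, q2, hq2, hp2, hpq2, hmin2⟩ :=
    TwoTypeGame.exists_isShiftMinimal_le hb2 ((hMinWin a2 b2).1 hw2).1
  have hlosing : TwoTypeGame.IsLosingSum n1 n2 Win (u1 + u2) (v1 + v2) :=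
    ⟨u1, v1, u2, v2, hu1, hv1, hu2, hv2, hl1, hl2, rfl, rfl⟩
  obtain ⟨s1, t1, s2, t2, hs1, ht1, hs2, ht2, hl1', hl2', hS, hT⟩ :=
    hlosing.mono hupset (S' := p1 + p2) (T' := q1 + q2) (by omega) (by omega) (by omega)
  exact ⟨p1, q1, p2, q2, s1, t1, s2, t2, by omega, hq1, by omega, hq2, hs1, ht1, hs2, ht2,
    (hShiftMinWin p1 q1).2 hmin1, (hShiftMinWin p2 q2).2 hmin2, hl1', hl2', hS.symm, hT.symm⟩
end

section
/- For m ≥ 3, the complete simple game with class sizes (2, m, m) and shift-minimal winning types w_1 = (2,1,0), w_2 = (2,0,2), w_3 = (1,0,m), w_4 = (0,m,m-1) is not (m+1)-invariant trade robust: the identity (m-1)·w_1 + 2·w_3 = m·l_1 + 1·l_5 holds componentwise, where l_1 = (2,0,1) and l_5 = (0,m-1,m) are losing types, and (m-1) + 2 = m + 1. -/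
/-- Dominance (partial-sums order) for coalition types with three classes. -/
def Dom3 (s w : ℕ × ℕ × ℕ) : Prop :=
  w.1 ≤ s.1 ∧ w.1 + w.2.1 ≤ s.1 + s.2.1 ∧
    w.1 + w.2.1 + w.2.2 ≤ s.1 + s.2.1 + s.2.2

/-- The complete simple game with class sizes `(2, m, m)` whose shift-minimal winning types are
`(2,1,0)`, `(2,0,2)`, `(1,0,m)` and `(0,m,m-1)`. -/
def IsWinningType (m : ℕ) (s : ℕ × ℕ × ℕ) : Prop :=
  Dom3 s (2, 1, 0) ∨ Dom3 s (2, 0, 2) ∨ Dom3 s (1, 0, m) ∨ Dom3 s (0, m, m - 1)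

theorem not_isWinningType_two_zero_one {m : ℕ} (hm : 3 ≤ m) : ¬ IsWinningType m (2, 0, 1) := by
  -- `(1,0,m)` and `(0,m,m-1)` are ruled out only because `m ≥ 3` exceeds the size of `(2,0,1)`.
  simp only [IsWinningType, Dom3]
  omega

theorem not_isWinningType_zero_pred_self {m : ℕ} (hm : 1 ≤ m) :
    ¬ IsWinningType m (0, m - 1, m) := by
  simp only [IsWinningType, Dom3]
  omega

/-- For `m ≥ 3`, the complete simple game with class sizes `(2, m, m)` and
shift-minimal winning types `(2,1,0)`, `(2,0,2)`, `(1,0,m)`, `(0,m,m-1)` is not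
`(m+1)`-invariant trade robust: `(m-1)·w1 + 2·w3 = m·l1 + 1·l5` with `l1, l5`
losing and `(m-1) + 2 = m + 1`. -/
theorem stmt17 (m : ℕ) (hm : 3 ≤ m) :
    let Win : ℕ × ℕ × ℕ → Prop := fun s =>
      Dom3 s (2, 1, 0) ∨ Dom3 s (2, 0, 2) ∨ Dom3 s (1, 0, m) ∨ Dom3 s (0, m, m - 1)
    ¬ Win (2, 0, 1) ∧ ¬ Win (0, m - 1, m) ∧
      ((m - 1) * 2 + 2 * 1 = m * 2 + 1 * 0 ∧
        (m - 1) * 1 + 2 * 0 = m * 0 + 1 * (m - 1) ∧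
        (m - 1) * 0 + 2 * m = m * 1 + 1 * m) ∧
      (m - 1) + 2 = m + 1 :=
  ⟨not_isWinningType_two_zero_one hm, not_isWinningType_zero_pred_self (by omega),
    ⟨by omega, by omega, by omega⟩, by omega⟩
end
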